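/- For all admissible a, i, j, the swap map zeta_{M|N}: Y(gl_{M|N}) -> Y(gl_{N|M}) satisfies: zeta_{M|N}(D_{a;i,j}(u)) = D'_{m+n+1-a; mu_a+1-i, mu_a+1-j}(u), zeta_{M|N}(E_{a;i,j}(u)) = -F_{m+n-a; mu_a+1-i, mu_{a+1}+1-j}(u), and zeta_{M|N}(F_{a;i,j}(u)) = -E_{m+n-a; mu_{a+1}+1-i, mu_a+1-j}(u), where the series on the left are the Gauss-decomposition series in Y(gl_{M|N}) associated to mu and the series on the right are the Gauss-decomposition series in Y(gl_{N|M}) associated to the reversed composition mu^r = (mu_{m+n},...,mu_{m+1} | mu_m,...,mu_1). -/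

import Mathlib

open scoped BigOperators

noncomputable section

/-- The free algebra on generators `t_{ij}^{(r+1)}` (a triple `(i,j,r)` encodes the
generator `t_{ij}^{(r+1)}`). -/
abbrev YFree (I : Type) := FreeAlgebra ℂ (I × I × ℕ)

variable {I : Type} [DecidableEq I]

/-- `tF i j r` is the element `t_{ij}^{(r)}` of the free algebra; `t_{ij}^{(0)} = δ_{ij}`. -/
def tF (i j : I) : ℕ → YFree I
  | 0 => algebraMap ℂ (YFree I) (if i = j then 1 else 0)
  | r + 1 => FreeAlgebra.ι ℂ (i, j, r)

/-- `sgn b = (-1)^b`. -/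
def sgn (b : Bool) : ℂ := if b then -1 else 1

/-- The defining relations of the super Yangian with parity function `p`
(`p i = true` means that the index `i` is odd):
`[t_{ij}^{(r)}, t_{hk}^{(s)}] = (-1)^{|i||j|+|i||h|+|j||h|} Σ_{t=0}^{min(r,s)-1}
  (t_{hj}^{(t)} t_{ik}^{(r+s-1-t)} - t_{hj}^{(r+s-1-t)} t_{ik}^{(t)})`,
where the bracket is the supercommutator. -/
inductive YRel (p : I → Bool) : YFree I → YFree I → Prop
  | rel (i j h k : I) (r s : ℕ) :
      YRel p (tF i j r * tF h k s)
        (sgn ((p i != p j) && (p h != p k)) • (tF h k s * tF i j r)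
          + sgn (((p i && p j) != (p i && p h)) != (p j && p h)) •
            ∑ t ∈ Finset.range (min r s),
              (tF h j t * tF i k (r + s - 1 - t) - tF h j (r + s - 1 - t) * tF i k t))

/-- The super Yangian associated to the index set `I` with parity function `p`. -/
abbrev Yangian (p : I → Bool) := RingQuot (YRel p)

/-- The generator `t_{ij}^{(r)}` of the super Yangian. -/
def tY (p : I → Bool) (i j : I) (r : ℕ) : Yangian p :=
  RingQuot.mkAlgHom ℂ (YRel p) (tF i j r)

/-- The generating series `t_{ij}(u) = Σ_{r ≥ 0} t_{ij}^{(r)} u^{-r}`, viewed as a formal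
power series in the variable `u^{-1}`. -/
def tSer (p : I → Bool) (i j : I) : PowerSeries (Yangian p) :=
  PowerSeries.mk fun r => tY p i j r

/- ### Composition (block) setup.
`μ = (μ_0, …, μ_{m-1} | μ_m, …, μ_{m+n-1})` is a composition of `(M|N)`: the first `m`
blocks are even and the last `n` blocks are odd.  The super Yangian `Y(gl_{M|N})` is
realized on the index set `Σ a, Fin (μ a)` (a block index together with an entry index),
with the parity of an index determined by its block. -/

variable (m n : ℕ) (μ : Fin (m + n) → ℕ)

/-- Index set attached to the composition `μ`. -/
abbrev CIdx := Σ a : Fin (m + n), Fin (μ a)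

/-- Parity of an index: even in the first `m` blocks, odd in the last `n` blocks. -/
def pC : CIdx m n μ → Bool := fun x => decide (m ≤ (x.1 : ℕ))

/-- The super Yangian `Y(gl_{M|N})` realized on the index set of the composition `μ`. -/
abbrev Yc := Yangian (pC m n μ)

abbrev Rc := PowerSeries (Yc m n μ)

/-- The matrix `T(u)`. -/
def Tc : Matrix (CIdx m n μ) (CIdx m n μ) (Rc m n μ) := fun i j => tSer _ i j

/-- Indices lying in the blocks strictly before block `a`. -/
abbrev CICorner (a : Fin (m + n)) := {x : CIdx m n μ // (x.1 : ℕ) < (a : ℕ)}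

/-- The leading corner of `T(u)` consisting of the blocks strictly before block `a`. -/
def Acorner (a : Fin (m + n)) :
    Matrix (CICorner m n μ a) (CICorner m n μ a) (Rc m n μ) :=
  fun x y => Tc m n μ x.1 y.1

/-- The quasideterminant `D_a(u)` (the `a`-th diagonal Gauss block of `T(u)`). -/
def Dmat (a : Fin (m + n)) : Matrix (Fin (μ a)) (Fin (μ a)) (Rc m n μ) :=
  fun i j =>
    Tc m n μ ⟨a, i⟩ ⟨a, j⟩ -
      ∑ x : CICorner m n μ a, ∑ y : CICorner m n μ a,
        Tc m n μ ⟨a, i⟩ x.1 * Ring.inverse (Acorner m n μ a) x y * Tc m n μ y.1 ⟨a, j⟩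

/-- `D'_a(u) = D_a(u)^{-1}`. -/
def Dmat' (a : Fin (m + n)) : Matrix (Fin (μ a)) (Fin (μ a)) (Rc m n μ) :=
  Ring.inverse (Dmat m n μ a)

/-- The boxed quasideterminant appearing in the formula for `E_{a,b}(u)`. -/
def quasE (a b : Fin (m + n)) : Matrix (Fin (μ a)) (Fin (μ b)) (Rc m n μ) :=
  fun i j =>
    Tc m n μ ⟨a, i⟩ ⟨b, j⟩ -
      ∑ x : CICorner m n μ a, ∑ y : CICorner m n μ a,
        Tc m n μ ⟨a, i⟩ x.1 * Ring.inverse (Acorner m n μ a) x y * Tc m n μ y.1 ⟨b, j⟩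

/-- The boxed quasideterminant appearing in the formula for `F_{b,a}(u)`. -/
def quasF (b a : Fin (m + n)) : Matrix (Fin (μ b)) (Fin (μ a)) (Rc m n μ) :=
  fun i j =>
    Tc m n μ ⟨b, i⟩ ⟨a, j⟩ -
      ∑ x : CICorner m n μ a, ∑ y : CICorner m n μ a,
        Tc m n μ ⟨b, i⟩ x.1 * Ring.inverse (Acorner m n μ a) x y * Tc m n μ y.1 ⟨a, j⟩

/-- The Gauss block `E_{a,b}(u) = D'_a(u) ⬝ (boxed quasideterminant)`. -/
def Emat (a b : Fin (m + n)) : Matrix (Fin (μ a)) (Fin (μ b)) (Rc m n μ) :=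
  Dmat' m n μ a * quasE m n μ a b

/-- The Gauss block `F_{b,a}(u) = (boxed quasideterminant) ⬝ D'_a(u)`. -/
def Fmat (b a : Fin (m + n)) : Matrix (Fin (μ b)) (Fin (μ a)) (Rc m n μ) :=
  quasF m n μ b a * Dmat' m n μ a

/-- `D_{a;i,j}^{(r)}`. -/
def Dc (a : Fin (m + n)) (i j : Fin (μ a)) (r : ℕ) : Yc m n μ :=
  PowerSeries.coeff r (Dmat m n μ a i j)

/-- `D'_{a;i,j}^{(r)}`. -/
def D'c (a : Fin (m + n)) (i j : Fin (μ a)) (r : ℕ) : Yc m n μ :=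
  PowerSeries.coeff r (Dmat' m n μ a i j)

/-- `E_{a,b;i,j}^{(r)}`. -/
def Eabc (a b : Fin (m + n)) (i : Fin (μ a)) (j : Fin (μ b)) (r : ℕ) : Yc m n μ :=
  PowerSeries.coeff r (Emat m n μ a b i j)

/-- `F_{b,a;i,j}^{(r)}`. -/
def Fbac (b a : Fin (m + n)) (i : Fin (μ b)) (j : Fin (μ a)) (r : ℕ) : Yc m n μ :=
  PowerSeries.coeff r (Fmat m n μ b a i j)

/-- The block `a : Fin (m+n)` built from `a : ℕ` with `a + 1 < m + n`. -/
abbrev blk (a : ℕ) (h : a + 1 < m + n) : Fin (m + n) := ⟨a, Nat.lt_of_succ_lt h⟩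
abbrev blk' (a : ℕ) (h : a + 1 < m + n) : Fin (m + n) := ⟨a + 1, h⟩

/-- `E_{a;i,j}^{(r)} = E_{a,a+1;i,j}^{(r)}` (0-indexed block `a`). -/
def Ec (a : ℕ) (h : a + 1 < m + n) (i : Fin (μ (blk m n a h))) (j : Fin (μ (blk' m n a h)))
    (r : ℕ) : Yc m n μ :=
  Eabc m n μ (blk m n a h) (blk' m n a h) i j r

/-- `F_{a;i,j}^{(r)} = F_{a+1,a;i,j}^{(r)}` (0-indexed block `a`). -/
def Fc (a : ℕ) (h : a + 1 < m + n) (i : Fin (μ (blk' m n a h))) (j : Fin (μ (blk m n a h)))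
    (r : ℕ) : Yc m n μ :=
  Fbac m n μ (blk' m n a h) (blk m n a h) i j r

/-- The matrix `T(-u)` in the block realization. -/
def TcNeg : Matrix (CIdx m n μ) (CIdx m n μ) (Rc m n μ) :=
  fun i j => PowerSeries.mk fun r => ((-1 : ℂ) ^ r) • tY (pC m n μ) i j r

/-- `IsOmegaC f` says that `f(T(u)) = (T(-u))^{-1}`. -/
def IsOmegaC (f : Yc m n μ →+* Yc m n μ) : Prop :=
  (Matrix.of fun i j => PowerSeries.map f (Tc m n μ i j)) * TcNeg m n μ = 1 ∧
    TcNeg m n μ * (Matrix.of fun i j => PowerSeries.map f (Tc m n μ i j)) = 1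

variable (μr : Fin (n + m) → ℕ)

/-- `σ` is the index-reversing bijection (reversing both blocks and entries). -/
def IsRevIdx (σ : CIdx m n μ → CIdx n m μr) : Prop :=
  ∀ x : CIdx m n μ,
    ((σ x).1 : ℕ) = m + n - 1 - (x.1 : ℕ) ∧ ((σ x).2 : ℕ) = μ x.1 - 1 - (x.2 : ℕ)

/-- `IsRhoC σ g` says that `g(t_{ij}(u)) = t_{σ(i),σ(j)}(-u)`. -/
def IsRhoC (σ : CIdx m n μ → CIdx n m μr) (g : Yc m n μ → Yc n m μr) : Prop :=
  ∀ (x y : CIdx m n μ) (r : ℕ),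
    g (tY (pC m n μ) x y r) = ((-1 : ℂ) ^ r) • tY (pC n m μr) (σ x) (σ y) r

/-!
`ζ = ρ ∘ ω` sends `T(u)` to the inverse of `T_σ(u) = (t_{σx,σy}(u))`, the `T`-matrix of
`Y(gl_{N|M})` reindexed by the reversal `σ` (the signs `(-1)^r` of `ω` and `ρ` cancel). The Gauss
factors are quasideterminants, i.e. Schur complements of leading corners. For mutually inverse
matrices `T` and `M` and a splitting of the indices into `L ⊔ A ⊔ G` (blocks before, at and after
`a`), two Schur complement steps show that the quasideterminant of `T` at `A` with respect to `L`
is inverse to that of `M` at `A` with respect to `G`, and that the adjacent off-diagonal Gauss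
factors of `T` and `M` agree up to sign. Since `σ` maps the blocks after `a` onto the blocks
before `m + n - 1 - a`, the quasideterminants of `T_σ` with respect to `G` are the Gauss factors
of `Y(gl_{N|M})` for `μʳ`, with the entries of each block read in reverse.
-/

theorem Ring.inverse_eq_of_mul_eq_one {M₀ : Type*} [MonoidWithZero M₀] {a b : M₀}
    (hab : a * b = 1) (hba : b * a = 1) : Ring.inverse a = b :=
  Ring.inverse_unit ⟨a, b, hab, hba⟩

theorem RingHom.map_ringInverse {R S : Type*} [Semiring R] [Semiring S] (f : R →+* S) {a : R}
    (ha : IsUnit a) : f (Ring.inverse a) = Ring.inverse (f a) := by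
  obtain ⟨u, rfl⟩ := ha
  rw [Ring.inverse_unit, show f u = (Units.map (f : R →* S) u : S) from rfl, Ring.inverse_unit,
    ← map_inv]
  rfl

theorem RingEquiv.map_ringInverse {R S : Type*} [Semiring R] [Semiring S] (f : R ≃+* S) (a : R) :
    f (Ring.inverse a) = Ring.inverse (f a) := by
  by_cases ha : IsUnit a
  · exact f.toRingHom.map_ringInverse ha
  · rw [Ring.inverse_non_unit _ ha, Ring.inverse_non_unit _ ((isUnit_map_iff f a).not.2 ha),
      map_zero]

namespace Matrix

variable {R : Type*} [Ring R] {ι κ κ' ω α β γ δ η : Type*}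

section PowerSeries

variable [Fintype κ] [DecidableEq κ]

def powerSeriesEquiv : Matrix κ κ (PowerSeries R) ≃+* PowerSeries (Matrix κ κ R) where
  toFun A := PowerSeries.mk fun r => A.map (PowerSeries.coeff r)
  invFun F := of fun i j => PowerSeries.mk fun r => PowerSeries.coeff r F i j
  left_inv A := by ext; simp
  right_inv F := by ext; simp
  map_add' A B := by ext; simp
  map_mul' A B := by
    ext r i j
    rw [PowerSeries.coeff_mk, PowerSeries.coeff_mul, Matrix.sum_apply]
    simp only [map_apply, mul_apply, PowerSeries.coeff_mk, PowerSeries.coeff_mul, map_sum]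
    exact Finset.sum_comm

theorem isUnit_of_isUnit_map_constantCoeff {A : Matrix κ κ (PowerSeries R)}
    (hA : IsUnit (A.map PowerSeries.constantCoeff)) : IsUnit A := by
  have h : IsUnit (powerSeriesEquiv A) := by
    rw [PowerSeries.isUnit_iff_constantCoeff, ← PowerSeries.coeff_zero_eq_constantCoeff_apply]
    simpa [powerSeriesEquiv] using hA
  simpa using h.map (powerSeriesEquiv (R := R) (κ := κ)).symm

end PowerSeries

section Quasidet

variable [Fintype κ] [DecidableEq κ]

theorem ringInverse_submatrix_equiv [Fintype ι] [DecidableEq ι] (A : Matrix ι ι R) (e : κ ≃ ι) :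
    Ring.inverse (A.submatrix e e) = (Ring.inverse A).submatrix e e :=
  ((reindexRingEquiv R e.symm).map_ringInverse A).symm

def quasidet (T : Matrix ι ι R) (c : κ → ι) (r : α → ι) (s : β → ι) : Matrix α β R :=
  T.submatrix r s - T.submatrix r c * Ring.inverse (T.submatrix c c) * T.submatrix c s

theorem quasidet_apply (T : Matrix ι ι R) (c : κ → ι) (r : α → ι) (s : β → ι) (i : α) (j : β) :
    quasidet T c r s i j = T (r i) (s j) -
      ∑ x, ∑ y, T (r i) (c x) * Ring.inverse (T.submatrix c c) x y * T (c y) (s j) := by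
  simp only [quasidet, sub_apply, mul_apply, Finset.sum_mul, submatrix_apply]
  exact congrArg _ Finset.sum_comm

theorem quasidet_comp_equiv [Fintype κ'] [DecidableEq κ'] (T : Matrix ι ι R) (c : κ → ι)
    (e : κ' ≃ κ) (r : α → ι) (s : β → ι) : quasidet T (c ∘ e) r s = quasidet T c r s := by
  change T.submatrix r s - (T.submatrix r c).submatrix id e *
      Ring.inverse ((T.submatrix c c).submatrix e e) * (T.submatrix c s).submatrix e id = _
  rw [ringInverse_submatrix_equiv, submatrix_mul_equiv, submatrix_mul_equiv, submatrix_id_id]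
  rfl

theorem map_quasidet {S : Type*} [Ring S] (f : R →+* S) (T : Matrix ι ι R) (c : κ → ι)
    (hc : IsUnit (T.submatrix c c)) (r : α → ι) (s : β → ι) :
    (quasidet T c r s).map f = quasidet (T.map f) c r s := by
  have hinv : (Ring.inverse (T.submatrix c c)).map f = Ring.inverse ((T.map f).submatrix c c) :=
    f.mapMatrix.map_ringInverse hc
  rw [quasidet, Matrix.map_sub f (map_sub f), Matrix.map_mul, Matrix.map_mul, hinv]
  rfl

end Quasidet

section Schur

variable {g₁ : κ → ι} {g₂ : α → ι}

theorem submatrix_mul_eq_add [Fintype ι] [Fintype κ] [Fintype α]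
    (hg : Function.Bijective (Sum.elim g₁ g₂)) (A : Matrix β ι R) (B : Matrix ι γ R) (r : δ → β)
    (s : η → γ) :
    (A * B).submatrix r s =
      A.submatrix r g₁ * B.submatrix g₁ s + A.submatrix r g₂ * B.submatrix g₂ s := by
  ext i j
  simp only [submatrix_apply, add_apply, mul_apply]
  rw [← Fintype.sum_bijective _ hg
    (fun y => A (r i) (Sum.elim g₁ g₂ y) * B (Sum.elim g₁ g₂ y) (s j))
    (fun y => A (r i) y * B y (s j)) fun _ => rfl, Fintype.sum_sum_type]
  rfl

theorem one_submatrix_eq_zero_of_injective_sumElim [DecidableEq ι]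
    (hg : Function.Injective (Sum.elim g₁ g₂)) :
    (1 : Matrix ι ι R).submatrix g₁ g₂ = 0 ∧ (1 : Matrix ι ι R).submatrix g₂ g₁ = 0 :=
  ⟨ext fun _ _ => one_apply_ne fun h => Sum.inl_ne_inr (hg h),
    ext fun _ _ => one_apply_ne fun h => Sum.inr_ne_inl (hg h)⟩

variable [Fintype ι] [DecidableEq ι] [Fintype κ] [DecidableEq κ] [Fintype α]
  {T M : Matrix ι ι R} (hg : Function.Bijective (Sum.elim g₁ g₂))
  (hT : IsUnit (T.submatrix g₁ g₁))
include hg hT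

theorem submatrix_fst_snd_of_mul_eq_one (h : T * M = 1) :
    M.submatrix g₁ g₂ =
      -(Ring.inverse (T.submatrix g₁ g₁) * T.submatrix g₁ g₂ * M.submatrix g₂ g₂) := by
  have h₁₂ := submatrix_mul_eq_add hg T M g₁ g₂
  rw [h, (one_submatrix_eq_zero_of_injective_sumElim hg.injective).1] at h₁₂
  calc M.submatrix g₁ g₂
      = Ring.inverse (T.submatrix g₁ g₁) * (T.submatrix g₁ g₁ * M.submatrix g₁ g₂) := by
        rw [← Matrix.mul_assoc, Ring.inverse_mul_cancel _ hT, Matrix.one_mul]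
    _ = _ := by rw [eq_neg_of_add_eq_zero_left h₁₂.symm, Matrix.mul_neg, Matrix.mul_assoc]

theorem quasidet_mul_submatrix_eq_one [DecidableEq α] (h : T * M = 1) :
    quasidet T g₁ g₂ g₂ * M.submatrix g₂ g₂ = 1 := by
  have h₂₂ := submatrix_mul_eq_add hg T M g₂ g₂
  rw [h, submatrix_one g₂ (hg.injective.comp Sum.inr_injective :),
    submatrix_fst_snd_of_mul_eq_one hg hT h] at h₂₂
  rw [h₂₂, quasidet, Matrix.sub_mul, Matrix.mul_neg, sub_eq_add_neg, add_comm]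
  simp only [Matrix.mul_assoc]

theorem submatrix_snd_fst_of_mul_eq_one (h : M * T = 1) :
    M.submatrix g₂ g₁ =
      -(M.submatrix g₂ g₂ * T.submatrix g₂ g₁ * Ring.inverse (T.submatrix g₁ g₁)) := by
  have h₂₁ := submatrix_mul_eq_add hg M T g₂ g₁
  rw [h, (one_submatrix_eq_zero_of_injective_sumElim hg.injective).2] at h₂₁
  calc M.submatrix g₂ g₁
      = M.submatrix g₂ g₁ * T.submatrix g₁ g₁ * Ring.inverse (T.submatrix g₁ g₁) := by
        rw [Matrix.mul_assoc, Ring.mul_inverse_cancel _ hT, Matrix.mul_one]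
    _ = _ := by rw [eq_neg_of_add_eq_zero_left h₂₁.symm, Matrix.neg_mul]

theorem submatrix_mul_quasidet_eq_one [DecidableEq α] (h : M * T = 1) :
    M.submatrix g₂ g₂ * quasidet T g₁ g₂ g₂ = 1 := by
  have h₂₂ := submatrix_mul_eq_add hg M T g₂ g₂
  rw [h, submatrix_one g₂ (hg.injective.comp Sum.inr_injective :),
    submatrix_snd_fst_of_mul_eq_one hg hT h] at h₂₂
  rw [h₂₂, quasidet, Matrix.mul_sub, Matrix.neg_mul, sub_eq_add_neg, add_comm]
  simp only [Matrix.mul_assoc]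

end Schur

section Heredity

variable [Fintype γ] [DecidableEq γ] [Fintype β] [DecidableEq β] [Fintype η] [DecidableEq η]
  {N : Matrix γ γ R} (hN : IsUnit N) {kH : η → γ} {kB : β → γ}
  (hHB : Function.Bijective (Sum.elim kH kB)) (hH : IsUnit (N.submatrix kH kH))
include hN hHB hH

theorem ringInverse_submatrix_eq_ringInverse_quasidet :
    (Ring.inverse N).submatrix kB kB = Ring.inverse (quasidet N kH kB kB) :=
  (Ring.inverse_eq_of_mul_eq_one
    (quasidet_mul_submatrix_eq_one hHB hH (Ring.mul_inverse_cancel _ hN))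
    (submatrix_mul_quasidet_eq_one hHB hH (Ring.inverse_mul_cancel _ hN))).symm

theorem mul_ringInverse_submatrix (P : Matrix α γ R) :
    (P * Ring.inverse N).submatrix id kB =
      (P.submatrix id kB -
          P.submatrix id kH * Ring.inverse (N.submatrix kH kH) * N.submatrix kH kB) *
        Ring.inverse (quasidet N kH kB kB) := by
  rw [submatrix_mul_eq_add hHB,
    submatrix_fst_snd_of_mul_eq_one hHB hH (Ring.mul_inverse_cancel _ hN),
    ringInverse_submatrix_eq_ringInverse_quasidet hN hHB hH, Matrix.sub_mul, sub_eq_neg_add,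
    Matrix.mul_neg]
  simp only [Matrix.mul_assoc]

theorem ringInverse_mul_submatrix (P : Matrix γ α R) :
    (Ring.inverse N * P).submatrix kB id =
      Ring.inverse (quasidet N kH kB kB) *
        (P.submatrix kB id -
          N.submatrix kB kH * Ring.inverse (N.submatrix kH kH) * P.submatrix kH id) := by
  rw [submatrix_mul_eq_add hHB,
    submatrix_snd_fst_of_mul_eq_one hHB hH (Ring.inverse_mul_cancel _ hN),
    ringInverse_submatrix_eq_ringInverse_quasidet hN hHB hH, Matrix.mul_sub, sub_eq_neg_add,
    Matrix.neg_mul]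
  simp only [Matrix.mul_assoc]

end Heredity

section InverseGauss

variable [Fintype ι] [DecidableEq ι] [Fintype κ] [DecidableEq κ] [Fintype ω] [DecidableEq ω]
  [Fintype α] [DecidableEq α] [Fintype γ] [DecidableEq γ]
  {T M : Matrix ι ι R} (hTM : T * M = 1) (hMT : M * T = 1)
  {gL : κ → ι} {gW : ω → ι} (hLW : Function.Bijective (Sum.elim gL gW))
  {hG : γ → ω} {hA : α → ω} (hGA : Function.Bijective (Sum.elim hG hA))
  (hTL : IsUnit (T.submatrix gL gL)) (hMG : IsUnit (M.submatrix (gW ∘ hG) (gW ∘ hG)))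
include hTM hMT hLW hGA hTL hMG

/- The Schur complement `S = quasidet T gL gW gW` is inverse to `M_WW`; the Schur lemmas for the
pair `(M_WW, S)`, split as `G ⊔ A`, give this and the two lemmas below. -/
theorem quasidet_mul_quasidet_of_mul_eq_one :
    quasidet M (gW ∘ hG) (gW ∘ hA) (gW ∘ hA) * quasidet T gL (gW ∘ hA) (gW ∘ hA) = 1 ∧
      quasidet T gL (gW ∘ hA) (gW ∘ hA) * quasidet M (gW ∘ hG) (gW ∘ hA) (gW ∘ hA) = 1 :=
  ⟨quasidet_mul_submatrix_eq_one hGA hMG (submatrix_mul_quasidet_eq_one hLW hTL hMT),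
    submatrix_mul_quasidet_eq_one hGA hMG (quasidet_mul_submatrix_eq_one hLW hTL hTM)⟩

variable [Fintype β] [DecidableEq β] [Fintype η] [DecidableEq η]
  {kH : η → γ} {kB : β → γ} (hHB : Function.Bijective (Sum.elim kH kB))
  (hMH : IsUnit (M.submatrix (gW ∘ hG ∘ kH) (gW ∘ hG ∘ kH)))
include hHB hMH

theorem ringInverse_quasidet_mul_quasidet_of_mul_eq_one :
    Ring.inverse (quasidet T gL (gW ∘ hA) (gW ∘ hA)) * quasidet T gL (gW ∘ hA) (gW ∘ hG ∘ kB) =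
      -(quasidet M (gW ∘ hG ∘ kH) (gW ∘ hA) (gW ∘ hG ∘ kB) *
        Ring.inverse (quasidet M (gW ∘ hG ∘ kH) (gW ∘ hG ∘ kB) (gW ∘ hG ∘ kB))) := by
  obtain ⟨hQS, hSQ⟩ := quasidet_mul_quasidet_of_mul_eq_one hTM hMT hLW hGA hTL hMG
  set S := quasidet T gL gW gW
  set N := M.submatrix gW gW
  have hSAG : S.submatrix hA hG =
      -(S.submatrix hA hA * (N.submatrix hA hG * Ring.inverse (N.submatrix hG hG))) := by
    rw [submatrix_snd_fst_of_mul_eq_one hGA hMG (quasidet_mul_submatrix_eq_one hLW hTL hTM),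
      Matrix.mul_assoc]
  rw [Ring.inverse_eq_of_mul_eq_one hSQ hQS]
  change quasidet N hG hA hA * (S.submatrix hA hG).submatrix id kB = _
  rw [hSAG, submatrix_neg, Pi.neg_apply, Pi.neg_apply, Matrix.mul_neg,
    submatrix_mul _ _ id id kB Function.bijective_id, submatrix_id_id, ← Matrix.mul_assoc,
    show quasidet N hG hA hA * S.submatrix hA hA = 1 from hQS, Matrix.one_mul,
    mul_ringInverse_submatrix (N := N.submatrix hG hG) hMG hHB hMH]
  rfl

theorem quasidet_mul_ringInverse_quasidet_of_mul_eq_one :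
    quasidet T gL (gW ∘ hG ∘ kB) (gW ∘ hA) * Ring.inverse (quasidet T gL (gW ∘ hA) (gW ∘ hA)) =
      -(Ring.inverse (quasidet M (gW ∘ hG ∘ kH) (gW ∘ hG ∘ kB) (gW ∘ hG ∘ kB)) *
        quasidet M (gW ∘ hG ∘ kH) (gW ∘ hG ∘ kB) (gW ∘ hA)) := by
  obtain ⟨hQS, hSQ⟩ := quasidet_mul_quasidet_of_mul_eq_one hTM hMT hLW hGA hTL hMG
  set S := quasidet T gL gW gW
  set N := M.submatrix gW gW
  have hSGA : S.submatrix hG hA =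
      -((Ring.inverse (N.submatrix hG hG) * N.submatrix hG hA) * S.submatrix hA hA) :=
    submatrix_fst_snd_of_mul_eq_one hGA hMG (submatrix_mul_quasidet_eq_one hLW hTL hMT)
  rw [Ring.inverse_eq_of_mul_eq_one hSQ hQS]
  change (S.submatrix hG hA).submatrix kB id * quasidet N hG hA hA = _
  rw [hSGA, submatrix_neg, Pi.neg_apply, Pi.neg_apply, Matrix.neg_mul,
    submatrix_mul _ _ kB id id Function.bijective_id, submatrix_id_id, Matrix.mul_assoc,
    show S.submatrix hA hA * quasidet N hG hA hA = 1 from hSQ, Matrix.mul_one,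
    ringInverse_mul_submatrix (N := N.submatrix hG hG) hMG hHB hMH]
  rfl

end InverseGauss

end Matrix

abbrev CITail (k : ℕ) := {x : CIdx m n μ // k ≤ (x.1 : ℕ)}

section GaussCoordinates

open Matrix

variable {m n μ}

theorem Tc_map_constantCoeff : (Tc m n μ).map PowerSeries.constantCoeff = 1 := by
  ext x y
  rw [map_apply, ← PowerSeries.coeff_zero_eq_constantCoeff_apply, Tc, tSer, PowerSeries.coeff_mk,
    tY, tF, AlgHom.commutes, one_apply]
  split_ifs <;> simp

theorem isUnit_Tc_submatrix {κ : Type*} [Fintype κ] [DecidableEq κ] {g : κ → CIdx m n μ}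
    (hg : Function.Injective g) : IsUnit ((Tc m n μ).submatrix g g) := by
  refine isUnit_of_isUnit_map_constantCoeff ?_
  rw [← submatrix_map, Tc_map_constantCoeff, submatrix_one _ hg]
  exact isUnit_one

theorem isUnit_map_Tc_submatrix {S : Type*} [Ring S] (f : Yc m n μ →+* S) {κ : Type*}
    [Fintype κ] [DecidableEq κ] {g : κ → CIdx m n μ} (hg : Function.Injective g) :
    IsUnit (((Tc m n μ).map (PowerSeries.map f)).submatrix g g) := by
  rw [submatrix_map]
  exact (isUnit_Tc_submatrix hg).map (PowerSeries.map f).mapMatrix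

theorem map_quasidet_Tc {S : Type*} [Ring S] (f : Yc m n μ →+* S) (a : Fin (m + n))
    {α β : Type*} (r : α → CIdx m n μ) (s : β → CIdx m n μ) :
    (quasidet (Tc m n μ) (Subtype.val : CICorner m n μ a → _) r s).map (PowerSeries.map f) =
      quasidet ((Tc m n μ).map (PowerSeries.map f)) (Subtype.val : CICorner m n μ a → _) r s :=
  map_quasidet _ _ _ (isUnit_Tc_submatrix Subtype.val_injective) _ _

theorem Dmat_eq_quasidet (a : Fin (m + n)) :
    Dmat m n μ a =
      quasidet (Tc m n μ) (Subtype.val : CICorner m n μ a → _) (Sigma.mk a) (Sigma.mk a) := by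
  ext i j
  rw [quasidet_apply]
  rfl

theorem quasE_eq_quasidet (a b : Fin (m + n)) :
    quasE m n μ a b =
      quasidet (Tc m n μ) (Subtype.val : CICorner m n μ a → _) (Sigma.mk a) (Sigma.mk b) := by
  ext i j
  rw [quasidet_apply]
  rfl

theorem quasF_eq_quasidet (b a : Fin (m + n)) :
    quasF m n μ b a =
      quasidet (Tc m n μ) (Subtype.val : CICorner m n μ a → _) (Sigma.mk b) (Sigma.mk a) := by
  ext i j
  rw [quasidet_apply]
  rfl

theorem isUnit_Dmat (a : Fin (m + n)) : IsUnit (Dmat m n μ a) := by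
  have hinj : Function.Injective (Sum.elim (Subtype.val : CICorner m n μ a → _) (Sigma.mk a)) :=
    Subtype.val_injective.sumElim sigma_mk_injective fun x i h => (h ▸ x.2).false
  refine isUnit_of_isUnit_map_constantCoeff ?_
  rw [Dmat_eq_quasidet, map_quasidet _ _ _ (isUnit_Tc_submatrix Subtype.val_injective),
    Tc_map_constantCoeff, quasidet, (one_submatrix_eq_zero_of_injective_sumElim hinj).2,
    submatrix_one _ sigma_mk_injective, Matrix.zero_mul, Matrix.zero_mul, sub_zero]
  exact isUnit_one

theorem Emat_eq_quasidet (a b : Fin (m + n)) :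
    Emat m n μ a b =
      Ring.inverse (quasidet (Tc m n μ) (Subtype.val : CICorner m n μ a → _) (Sigma.mk a)
        (Sigma.mk a)) *
      quasidet (Tc m n μ) (Subtype.val : CICorner m n μ a → _) (Sigma.mk a) (Sigma.mk b) := by
  rw [Emat, Dmat', Dmat_eq_quasidet, quasE_eq_quasidet]

theorem Fmat_eq_quasidet (b a : Fin (m + n)) :
    Fmat m n μ b a =
      quasidet (Tc m n μ) (Subtype.val : CICorner m n μ a → _) (Sigma.mk b) (Sigma.mk a) *
      Ring.inverse (quasidet (Tc m n μ) (Subtype.val : CICorner m n μ a → _) (Sigma.mk a)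
        (Sigma.mk a)) := by
  rw [Fmat, Dmat', Dmat_eq_quasidet, quasF_eq_quasidet]

theorem map_Emat {S : Type*} [Ring S] (f : Yc m n μ →+* S) (a b : Fin (m + n)) :
    (Emat m n μ a b).map (PowerSeries.map f) =
      Ring.inverse (quasidet ((Tc m n μ).map (PowerSeries.map f))
        (Subtype.val : CICorner m n μ a → _) (Sigma.mk a) (Sigma.mk a)) *
      quasidet ((Tc m n μ).map (PowerSeries.map f)) (Subtype.val : CICorner m n μ a → _)
        (Sigma.mk a) (Sigma.mk b) := by
  rw [Emat, Matrix.map_mul, Dmat', ← RingHom.mapMatrix_apply,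
    RingHom.map_ringInverse _ (isUnit_Dmat a), RingHom.mapMatrix_apply, Dmat_eq_quasidet,
    quasE_eq_quasidet, map_quasidet_Tc, map_quasidet_Tc]

theorem map_Fmat {S : Type*} [Ring S] (f : Yc m n μ →+* S) (b a : Fin (m + n)) :
    (Fmat m n μ b a).map (PowerSeries.map f) =
      quasidet ((Tc m n μ).map (PowerSeries.map f)) (Subtype.val : CICorner m n μ a → _)
        (Sigma.mk b) (Sigma.mk a) *
      Ring.inverse (quasidet ((Tc m n μ).map (PowerSeries.map f))
        (Subtype.val : CICorner m n μ a → _) (Sigma.mk a) (Sigma.mk a)) := by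
  rw [Fmat, Matrix.map_mul, Dmat', ← RingHom.mapMatrix_apply,
    RingHom.map_ringInverse _ (isUnit_Dmat a), RingHom.mapMatrix_apply, Dmat_eq_quasidet,
    quasF_eq_quasidet, map_quasidet_Tc, map_quasidet_Tc]

end GaussCoordinates

section BlockPartition

variable {m n μ}

def tailSucc (k : ℕ) : CITail m n μ (k + 1) → CITail m n μ k :=
  fun x => ⟨x.1, Nat.le_of_succ_le x.2⟩

def blockTail (a : Fin (m + n)) : Fin (μ a) → CITail m n μ a :=
  fun i => ⟨⟨a, i⟩, le_rfl⟩

theorem bijective_sumElim_corner_tail (a : Fin (m + n)) :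
    Function.Bijective
      (Sum.elim (Subtype.val : CICorner m n μ a → _) (Subtype.val : CITail m n μ a → _)) := by
  refine ⟨Subtype.val_injective.sumElim Subtype.val_injective fun x y h => ?_, fun x => ?_⟩
  · exact absurd (h ▸ x.2) (not_lt.2 y.2)
  · by_cases hx : (x.1 : ℕ) < a
    exacts [⟨Sum.inl ⟨x, hx⟩, rfl⟩, ⟨Sum.inr ⟨x, not_lt.1 hx⟩, rfl⟩]

theorem bijective_sumElim_tailSucc_blockTail (a : Fin (m + n)) :
    Function.Bijective (Sum.elim (tailSucc (a : ℕ)) (blockTail (μ := μ) a)) := by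
  refine ⟨Function.Injective.sumElim ?_ ?_ fun x i h => ?_, ?_⟩
  · exact fun x y h => Subtype.ext (congrArg Subtype.val h :)
  · exact fun i j h => by simpa [blockTail] using h
  · have hx := x.2
    have hblock := congrArg (fun y : CITail m n μ a => (y.1.1 : ℕ)) h
    simp only [tailSucc, blockTail] at hblock
    omega
  · rintro ⟨⟨b, i⟩, hb⟩
    obtain heq | hlt := eq_or_lt_of_le hb
    · obtain rfl : b = a := Fin.ext heq.symm
      exact ⟨Sum.inr i, rfl⟩
    · exact ⟨Sum.inl ⟨⟨b, i⟩, hlt⟩, rfl⟩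

end BlockPartition

section Reversal

open Matrix

variable {m n μ μr} {σ : CIdx m n μ → CIdx n m μr} (hσ : IsRevIdx m n μ μr σ)
  (hrev : ∀ (a : Fin (m + n)) (b : Fin (n + m)), (b : ℕ) = m + n - 1 - (a : ℕ) → μr b = μ a)

theorem CIdx.ext_val {x y : CIdx m n μ} (h₁ : (x.1 : ℕ) = y.1) (h₂ : (x.2 : ℕ) = y.2) :
    x = y := by
  obtain ⟨a, i⟩ := x
  obtain ⟨b, j⟩ := y
  obtain rfl : a = b := Fin.ext h₁
  obtain rfl : i = j := Fin.ext h₂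
  rfl

def blockRev (p : Fin (m + n)) (p' : Fin (n + m)) (hp : (p' : ℕ) = m + n - 1 - p) :
    Fin (μr p') ≃ Fin (μ p) :=
  (finCongr (hrev p p' hp)).trans Fin.revPerm

theorem blockRev_val {p : Fin (m + n)} {p' : Fin (n + m)} (hp : (p' : ℕ) = m + n - 1 - p)
    (i : Fin (μr p')) : (blockRev hrev p p' hp i : ℕ) = μ p - 1 - i := by
  simp only [blockRev, Equiv.trans_apply, finCongr_apply, Fin.revPerm_apply, Fin.val_rev,
    Fin.val_cast]
  omega

theorem blockRev_apply {p : Fin (m + n)} {p' : Fin (n + m)} (hp : (p' : ℕ) = m + n - 1 - p)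
    {i : Fin (μ p)} {i' : Fin (μr p')} (hi : (i' : ℕ) = μ p - 1 - i) :
    blockRev hrev p p' hp i' = i :=
  Fin.ext (by rw [blockRev_val, hi]; have := i.isLt; omega)

include hσ in
theorem IsRevIdx.apply_mk_blockRev {p : Fin (m + n)} {p' : Fin (n + m)}
    (hp : (p' : ℕ) = m + n - 1 - p) (i : Fin (μr p')) :
    σ ⟨p, blockRev hrev p p' hp i⟩ = ⟨p', i⟩ := by
  refine CIdx.ext_val ((hσ _).1.trans hp.symm) ?_
  rw [(hσ _).2, blockRev_val]
  have := i.isLt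
  have := hrev p p' hp
  dsimp only
  omega

include hσ hrev in
theorem IsRevIdx.bijective : Function.Bijective σ := by
  refine ⟨fun x y h => ?_, fun ⟨b, k⟩ => ?_⟩
  · have hx := hσ x
    have hy := hσ y
    rw [h] at hx
    have h₁ : x.1 = y.1 := Fin.ext (by have := x.1.isLt; have := y.1.isLt; omega)
    refine CIdx.ext_val (congrArg Fin.val h₁) ?_
    have := x.2.isLt
    have := congrArg μ h₁
    omega
  · have hb := b.isLt
    have hb' : (b : ℕ) = m + n - 1 - (m + n - 1 - b) := by omega
    exact ⟨_, hσ.apply_mk_blockRev hrev (p := ⟨m + n - 1 - b, by omega⟩) hb' k⟩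

include hσ hrev in
/- `σ` maps the blocks from `k` on onto the blocks before `t`. -/
theorem IsRevIdx.quasidet_Tc_eq_submatrix {t : Fin (n + m)} {k : ℕ} (htk : (t : ℕ) + k = m + n)
    {p q : Fin (m + n)} {p' q' : Fin (n + m)} (hp : (p' : ℕ) = m + n - 1 - p)
    (hq : (q' : ℕ) = m + n - 1 - q) :
    quasidet (Tc n m μr) (Subtype.val : CICorner n m μr t → _) (Sigma.mk p') (Sigma.mk q') =
      (quasidet ((Tc n m μr).submatrix σ σ) (Subtype.val : CITail m n μ k → _)
        (Sigma.mk p) (Sigma.mk q)).submatrix (blockRev hrev p p' hp) (blockRev hrev q q' hq) := by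
  let e := Equiv.ofBijective σ (hσ.bijective hrev)
  have hT : Tc n m μr = ((Tc n m μr).submatrix e e).submatrix e.symm e.symm := by
    simp
  have hcorner : ∀ x : CIdx m n μ, k ≤ (x.1 : ℕ) ↔ ((e x).1 : ℕ) < t := fun x => by
    have := (hσ x).1
    have := x.1.isLt
    simp only [e, Equiv.ofBijective_apply]
    omega
  let φ : CITail m n μ k ≃ CICorner n m μr t := e.subtypeEquiv hcorner
  have hrow : ∀ {p : Fin (m + n)} {p' : Fin (n + m)} (hp : (p' : ℕ) = m + n - 1 - p),
      e.symm ∘ Sigma.mk p' = Sigma.mk p ∘ blockRev hrev p p' hp :=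
    fun hp => funext fun i => e.symm_apply_eq.2 (hσ.apply_mk_blockRev hrev hp i).symm
  conv_lhs => rw [hT]
  change quasidet ((Tc n m μr).submatrix e e) (Subtype.val ∘ φ.symm) (e.symm ∘ Sigma.mk p')
    (e.symm ∘ Sigma.mk q') = _
  rw [hrow hp, hrow hq, quasidet_comp_equiv]
  rfl

end Reversal

section Zeta

open Matrix

variable {m n μ μr} {σ : CIdx m n μ → CIdx n m μr}

theorem map_Tc_mul_eq_one_of_isRhoC_of_isOmegaC (ρ : Yc m n μ ≃ₐ[ℂ] Yc n m μr)
    (hρ : IsRhoC m n μ μr σ ⇑ρ) (ω : Yc m n μ ≃ₐ[ℂ] Yc m n μ)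
    (hω : IsOmegaC m n μ ω.toAlgHom.toRingHom) :
    (Tc m n μ).map (PowerSeries.map (ρ.toAlgHom.comp ω.toAlgHom).toRingHom) *
        (Tc n m μr).submatrix σ σ = 1 ∧
      (Tc n m μr).submatrix σ σ *
        (Tc m n μ).map (PowerSeries.map (ρ.toAlgHom.comp ω.toAlgHom).toRingHom) = 1 := by
  let Φ := (PowerSeries.map ρ.toAlgHom.toRingHom).mapMatrix (m := CIdx m n μ)
  have hζ : Φ (of fun x y => PowerSeries.map ω.toAlgHom.toRingHom (Tc m n μ x y)) =
      (Tc m n μ).map (PowerSeries.map (ρ.toAlgHom.comp ω.toAlgHom).toRingHom) := by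
    ext x y r
    simp [Φ, PowerSeries.coeff_map]
  have hneg : Φ (TcNeg m n μ) = (Tc n m μr).submatrix σ σ := by
    ext x y r
    simp [Φ, TcNeg, Tc, tSer, PowerSeries.coeff_map, hρ x y r, smul_smul, ← pow_add]
  obtain ⟨h₁, h₂⟩ := hω
  constructor
  · rw [← hζ, ← hneg, ← map_mul, h₁, map_one]
  · rw [← hζ, ← hneg, ← map_mul, h₂, map_one]

end Zeta

section GaussImage

open Matrix

variable {m n μ μr} {σ : CIdx m n μ → CIdx n m μr} (hσ : IsRevIdx m n μ μr σ)
  (hrev : ∀ (a : Fin (m + n)) (b : Fin (n + m)), (b : ℕ) = m + n - 1 - (a : ℕ) → μr b = μ a)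
  {f : Yc m n μ →+* Yc n m μr}
  (hTM : (Tc m n μ).map (PowerSeries.map f) * (Tc n m μr).submatrix σ σ = 1)
  (hMT : (Tc n m μr).submatrix σ σ * (Tc m n μ).map (PowerSeries.map f) = 1)
include hσ hrev hTM hMT

theorem map_Dmat_apply {a : Fin (m + n)} {a' : Fin (n + m)} (ha : (a' : ℕ) = m + n - 1 - a)
    {i j : Fin (μ a)} {i' j' : Fin (μr a')} (hi : (i' : ℕ) = μ a - 1 - i)
    (hj : (j' : ℕ) = μ a - 1 - j) :
    PowerSeries.map f (Dmat m n μ a i j) = Dmat' n m μr a' i' j' := by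
  have hbij := hσ.bijective hrev
  obtain ⟨hQS, hSQ⟩ := quasidet_mul_quasidet_of_mul_eq_one hTM hMT
      (bijective_sumElim_corner_tail a) (bijective_sumElim_tailSucc_blockTail a)
      (isUnit_map_Tc_submatrix f Subtype.val_injective)
      (isUnit_Tc_submatrix (hbij.injective.comp Subtype.val_injective))
  have hS : (Dmat m n μ a).map (PowerSeries.map f) =
      Ring.inverse (quasidet ((Tc n m μr).submatrix σ σ) (Subtype.val : CITail m n μ (a + 1) → _)
        (Sigma.mk a) (Sigma.mk a)) := by
    rw [Dmat_eq_quasidet, map_quasidet_Tc]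
    exact (Ring.inverse_eq_of_mul_eq_one hQS hSQ).symm
  rw [show PowerSeries.map f (Dmat m n μ a i j) = (Dmat m n μ a).map (PowerSeries.map f) i j
    from rfl, hS, Dmat', Dmat_eq_quasidet,
    hσ.quasidet_Tc_eq_submatrix hrev (k := a + 1) (by omega) ha ha,
    ringInverse_submatrix_equiv, submatrix_apply, blockRev_apply hrev ha hi,
    blockRev_apply hrev ha hj]

theorem map_Emat_apply {β : ℕ} (h : β + 1 < m + n) {β' : ℕ} (h' : β' + 1 < n + m)
    (hβ : β + β' + 2 = m + n) {i : Fin (μ (blk m n β h))} {j : Fin (μ (blk' m n β h))}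
    {i' : Fin (μr (blk' n m β' h'))} {j' : Fin (μr (blk n m β' h'))}
    (hi : (i' : ℕ) = μ (blk m n β h) - 1 - i) (hj : (j' : ℕ) = μ (blk' m n β h) - 1 - j) :
    PowerSeries.map f (Emat m n μ (blk m n β h) (blk' m n β h) i j) =
      -Fmat n m μr (blk' n m β' h') (blk n m β' h') i' j' := by
  have hbij := hσ.bijective hrev
  have hS : (Emat m n μ (blk m n β h) (blk' m n β h)).map (PowerSeries.map f) =
      -(quasidet ((Tc n m μr).submatrix σ σ) (Subtype.val : CITail m n μ (β + 2) → _)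
          (Sigma.mk (blk m n β h)) (Sigma.mk (blk' m n β h)) *
        Ring.inverse (quasidet ((Tc n m μr).submatrix σ σ) (Subtype.val : CITail m n μ (β + 2) → _)
          (Sigma.mk (blk' m n β h)) (Sigma.mk (blk' m n β h)))) := by
    rw [map_Emat]
    exact (ringInverse_quasidet_mul_quasidet_of_mul_eq_one hTM hMT
      (bijective_sumElim_corner_tail _) (bijective_sumElim_tailSucc_blockTail (blk m n β h))
      (isUnit_map_Tc_submatrix f Subtype.val_injective)
      (isUnit_Tc_submatrix (hbij.injective.comp Subtype.val_injective))
      (bijective_sumElim_tailSucc_blockTail (blk' m n β h))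
      (isUnit_Tc_submatrix (hbij.injective.comp Subtype.val_injective)) :)
  have hp : ((blk' n m β' h' : Fin (n + m)) : ℕ) = m + n - 1 - (blk m n β h : Fin (m + n)) :=
    show β' + 1 = m + n - 1 - β by omega
  have hq : ((blk n m β' h' : Fin (n + m)) : ℕ) = m + n - 1 - (blk' m n β h : Fin (m + n)) :=
    show β' = m + n - 1 - (β + 1) by omega
  rw [show PowerSeries.map f (Emat m n μ (blk m n β h) (blk' m n β h) i j) =
    (Emat m n μ (blk m n β h) (blk' m n β h)).map (PowerSeries.map f) i j from rfl, hS,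
    Fmat_eq_quasidet,
    hσ.quasidet_Tc_eq_submatrix hrev (k := β + 2) (show β' + (β + 2) = m + n by omega) hp hq,
    hσ.quasidet_Tc_eq_submatrix hrev (k := β + 2) (show β' + (β + 2) = m + n by omega) hq hq,
    ringInverse_submatrix_equiv, submatrix_mul_equiv, Matrix.neg_apply, submatrix_apply,
    blockRev_apply hrev hp hi, blockRev_apply hrev hq hj]

theorem map_Fmat_apply {β : ℕ} (h : β + 1 < m + n) {β' : ℕ} (h' : β' + 1 < n + m)
    (hβ : β + β' + 2 = m + n) {i : Fin (μ (blk' m n β h))} {j : Fin (μ (blk m n β h))}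
    {i' : Fin (μr (blk n m β' h'))} {j' : Fin (μr (blk' n m β' h'))}
    (hi : (i' : ℕ) = μ (blk' m n β h) - 1 - i) (hj : (j' : ℕ) = μ (blk m n β h) - 1 - j) :
    PowerSeries.map f (Fmat m n μ (blk' m n β h) (blk m n β h) i j) =
      -Emat n m μr (blk n m β' h') (blk' n m β' h') i' j' := by
  have hbij := hσ.bijective hrev
  have hS : (Fmat m n μ (blk' m n β h) (blk m n β h)).map (PowerSeries.map f) =
      -(Ring.inverse (quasidet ((Tc n m μr).submatrix σ σ) (Subtype.val : CITail m n μ (β + 2) → _)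
          (Sigma.mk (blk' m n β h)) (Sigma.mk (blk' m n β h))) *
        quasidet ((Tc n m μr).submatrix σ σ) (Subtype.val : CITail m n μ (β + 2) → _)
          (Sigma.mk (blk' m n β h)) (Sigma.mk (blk m n β h))) := by
    rw [map_Fmat]
    exact (quasidet_mul_ringInverse_quasidet_of_mul_eq_one hTM hMT
      (bijective_sumElim_corner_tail _) (bijective_sumElim_tailSucc_blockTail (blk m n β h))
      (isUnit_map_Tc_submatrix f Subtype.val_injective)
      (isUnit_Tc_submatrix (hbij.injective.comp Subtype.val_injective))
      (bijective_sumElim_tailSucc_blockTail (blk' m n β h))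
      (isUnit_Tc_submatrix (hbij.injective.comp Subtype.val_injective)) :)
  have hp : ((blk' n m β' h' : Fin (n + m)) : ℕ) = m + n - 1 - (blk m n β h : Fin (m + n)) :=
    show β' + 1 = m + n - 1 - β by omega
  have hq : ((blk n m β' h' : Fin (n + m)) : ℕ) = m + n - 1 - (blk' m n β h : Fin (m + n)) :=
    show β' = m + n - 1 - (β + 1) by omega
  rw [show PowerSeries.map f (Fmat m n μ (blk' m n β h) (blk m n β h) i j) =
    (Fmat m n μ (blk' m n β h) (blk m n β h)).map (PowerSeries.map f) i j from rfl, hS,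
    Emat_eq_quasidet,
    hσ.quasidet_Tc_eq_submatrix hrev (k := β + 2) (show β' + (β + 2) = m + n by omega) hq hp,
    hσ.quasidet_Tc_eq_submatrix hrev (k := β + 2) (show β' + (β + 2) = m + n by omega) hq hq,
    ringInverse_submatrix_equiv, submatrix_mul_equiv, Matrix.neg_apply, submatrix_apply,
    blockRev_apply hrev hq hi, blockRev_apply hrev hp hj]

end GaussImage

/-- **Proposition 4.4.** For the swap map `ζ_{M|N} = ρ_{M|N} ∘ ω_{M|N}` and the reversed
composition `μʳ` of `(N|M)` one has, for all admissible `a, i, j`: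
`ζ(D_{a;i,j}(u)) = D'_{m+n+1-a; μ_a+1-i, μ_a+1-j}(u)`,
`ζ(E_{a;i,j}(u)) = -F_{m+n-a; μ_a+1-i, μ_{a+1}+1-j}(u)`,
`ζ(F_{a;i,j}(u)) = -E_{m+n-a; μ_{a+1}+1-i, μ_a+1-j}(u)`
(series on the left in `Y(gl_{M|N})`, on the right in `Y(gl_{N|M})`; everything is
0-indexed here, so the reversal hypotheses are phrased numerically). -/
theorem zeta_on_gauss_generators
    (hrev : ∀ (a : Fin (m + n)) (b : Fin (n + m)),
      (b : ℕ) = m + n - 1 - (a : ℕ) → μr b = μ a)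
    (σ : CIdx m n μ → CIdx n m μr) (hσ : IsRevIdx m n μ μr σ)
    (ρ : Yc m n μ ≃ₐ[ℂ] Yc n m μr) (hρ : IsRhoC m n μ μr σ ⇑ρ)
    (ω : Yc m n μ ≃ₐ[ℂ] Yc m n μ) (hω : IsOmegaC m n μ ω.toAlgHom.toRingHom) :
    (∀ (a : Fin (m + n)) (i j : Fin (μ a)) (a' : Fin (n + m))
        (i' j' : Fin (μr a')),
      ((a' : ℕ) = m + n - 1 - (a : ℕ)) →
      ((i' : ℕ) = μ a - 1 - (i : ℕ)) → ((j' : ℕ) = μ a - 1 - (j : ℕ)) →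
      PowerSeries.map (ρ.toAlgHom.comp ω.toAlgHom).toRingHom (Dmat m n μ a i j) =
        Dmat' n m μr a' i' j') ∧
    (∀ (β : ℕ) (h : β + 1 < m + n) (i : Fin (μ (blk m n β h)))
        (j : Fin (μ (blk' m n β h))) (β' : ℕ) (h' : β' + 1 < n + m)
        (i' : Fin (μr (blk' n m β' h'))) (j' : Fin (μr (blk n m β' h'))),
      (β + β' + 2 = m + n) →
      ((i' : ℕ) = μ (blk m n β h) - 1 - (i : ℕ)) →
      ((j' : ℕ) = μ (blk' m n β h) - 1 - (j : ℕ)) →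
      PowerSeries.map (ρ.toAlgHom.comp ω.toAlgHom).toRingHom
          (Emat m n μ (blk m n β h) (blk' m n β h) i j) =
        - Fmat n m μr (blk' n m β' h') (blk n m β' h') i' j') ∧
    (∀ (β : ℕ) (h : β + 1 < m + n) (i : Fin (μ (blk' m n β h)))
        (j : Fin (μ (blk m n β h))) (β' : ℕ) (h' : β' + 1 < n + m)
        (i' : Fin (μr (blk n m β' h'))) (j' : Fin (μr (blk' n m β' h'))),
      (β + β' + 2 = m + n) →
      ((i' : ℕ) = μ (blk' m n β h) - 1 - (i : ℕ)) →
      ((j' : ℕ) = μ (blk m n β h) - 1 - (j : ℕ)) →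
      PowerSeries.map (ρ.toAlgHom.comp ω.toAlgHom).toRingHom
          (Fmat m n μ (blk' m n β h) (blk m n β h) i j) =
        - Emat n m μr (blk n m β' h') (blk' n m β' h') i' j') := by
  obtain ⟨hTM, hMT⟩ := map_Tc_mul_eq_one_of_isRhoC_of_isOmegaC ρ hρ ω hω
  exact ⟨fun _ _ _ _ _ _ ha hi hj => map_Dmat_apply hσ hrev hTM hMT ha hi hj,
    fun _ h _ _ _ h' _ _ hβ hi hj => map_Emat_apply hσ hrev hTM hMT h h' hβ hi hj,
    fun _ h _ _ _ h' _ _ hβ hi hj => map_Fmat_apply hσ hrev hTM hMT h h' hβ hi hj⟩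

end
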